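/- arXiv:2208.01727 — 7 statements merged into one kernel-verified Lean document; each statement's English description precedes it below -/
import Mathlib

section
/- Assume the semigroup possesses a compact (𝔹,Σ)-attracting set K ⊆ Φ. Then for every nonempty B ∈ 𝔹 the ω-limit set ω(B) is a nonempty compact subset of K. -/
open Metric Filter Topology

noncomputable section

/-- The ω-limit set of a set `B` under the multi-parametric semigroup `S`
with time arrow `Sig`. -/
def omegaSet {m : ℕ} {Φ : Type*} [MetricSpace Φ]
    (S : EuclideanSpace ℝ (Fin m) → Φ → Φ) (Sig : Set (EuclideanSpace ℝ (Fin m)))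
    (B : Set Φ) : Set Φ :=
  {u₀ | ∃ (h : ℕ → EuclideanSpace ℝ (Fin m)) (u : ℕ → Φ),
    (∀ n, h n ∈ Sig) ∧
    Tendsto (fun n => infDist (h n) (frontier Sig)) atTop atTop ∧
    (∀ n, u n ∈ B) ∧
    Tendsto (fun n => S (h n) (u n)) atTop (𝓝 u₀)}

/-- `K` is a `(𝔹,Σ)`-attracting set for the semigroup `S`. -/
def IsAttractingSet {m : ℕ} {Φ : Type*} [MetricSpace Φ]
    (S : EuclideanSpace ℝ (Fin m) → Φ → Φ) (Sig : Set (EuclideanSpace ℝ (Fin m)))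
    (Bor : Set (Set Φ)) (K : Set Φ) : Prop :=
  ∀ B ∈ Bor, ∀ ε : ℝ, 0 < ε → ∃ D : ℝ, 0 < D ∧
    ∀ h ∈ Sig, infDist h (frontier Sig) ≥ D → S h '' B ⊆ thickening ε K

/-!
Letting `h` run to infinity in `Σ`, away from its frontier, while `u` ranges over `B` defines a
countably generated filter on pairs, and by first countability `ω(B)` is exactly the set of cluster
points of `(h, u) ↦ S(h) u` along it; hence `ω(B)` is closed. Attraction by the compact set `K`
says that `S(h) u` tends to the neighbourhood filter `𝓝ˢ K`, which forces every cluster point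
into `K` and, by compactness, produces at least one.
-/

open Function

section TimeArrow

variable {E : Type*} [PseudoMetricSpace E] {Sig : Set E}

def timeArrowFilter (Sig : Set E) : Filter E :=
  comap (fun h => infDist h (frontier Sig)) atTop ⊓ 𝓟 Sig

theorem timeArrowFilter_basis :
    (timeArrowFilter Sig).HasBasis (fun _ : ℝ => True)
      fun D => {h | D ≤ infDist h (frontier Sig)} ∩ Sig :=
  (atTop_basis.comap _).inf_principal Sig

instance : (timeArrowFilter Sig).IsCountablyGenerated := by
  unfold timeArrowFilter; infer_instance

theorem timeArrowFilter_neBot (hcof : ∀ D : ℝ, 0 < D → ∃ h ∈ Sig, infDist h (frontier Sig) ≥ D) :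
    (timeArrowFilter Sig).NeBot := by
  refine timeArrowFilter_basis.neBot_iff.2 fun {D} _ => ?_
  obtain ⟨h, hSig, hD⟩ := hcof (max D 1) (lt_max_of_lt_right one_pos)
  exact ⟨h, (le_max_left D 1).trans hD, hSig⟩

theorem tendsto_timeArrowFilter_iff {ι : Type*} {l : Filter ι} {h : ι → E} :
    Tendsto h l (timeArrowFilter Sig) ↔
      Tendsto (fun i => infDist (h i) (frontier Sig)) l atTop ∧ ∀ᶠ i in l, h i ∈ Sig := by
  simp only [timeArrowFilter, tendsto_inf, tendsto_comap_iff, tendsto_principal, comp_def]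

end TimeArrow

section ClusterPt

variable {X α : Type*} [TopologicalSpace X] {K : Set X} {l : Filter α} {f : α → X}

theorem IsCompact.exists_mapClusterPt_of_tendsto_nhdsSet [l.NeBot] (hK : IsCompact K)
    (hf : Tendsto f l (𝓝ˢ K)) : ∃ x ∈ K, MapClusterPt x l f := by
  by_contra! hnone
  have hdisj : Disjoint (𝓝ˢ K) (map f l) :=
    hK.disjoint_nhdsSet_left.2 fun x hx => clusterPt_iff_not_disjoint.not_left.1 (hnone x hx)
  exact (map_neBot (m := f)).ne (disjoint_self.1 (hdisj.mono_left hf))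

theorem IsClosed.mem_of_mapClusterPt_of_tendsto_nhdsSet [RegularSpace X] {x : X}
    (hK : IsClosed K) (hf : Tendsto f l (𝓝ˢ K)) (hx : MapClusterPt x l f) : x ∈ K := by
  by_contra hxK
  have hdisj : Disjoint (𝓝 x) (𝓝ˢ K) := disjoint_nhds_nhdsSet.2 (by rwa [hK.closure_eq])
  exact clusterPt_iff_not_disjoint.1 hx (hdisj.mono_right hf)

end ClusterPt

section OmegaLimit

variable {m : ℕ} {Φ : Type*} [MetricSpace Φ] {S : EuclideanSpace ℝ (Fin m) → Φ → Φ}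
  {Sig : Set (EuclideanSpace ℝ (Fin m))} {B : Set Φ}

theorem mem_omegaSet_iff_mapClusterPt {u₀ : Φ} :
    u₀ ∈ omegaSet S Sig B ↔ MapClusterPt u₀ (timeArrowFilter Sig ×ˢ 𝓟 B) (uncurry S) := by
  constructor
  · rintro ⟨h, u, hSig, hfar, hB, hconv⟩
    have hpair : Tendsto (fun n => (h n, u n)) atTop (timeArrowFilter Sig ×ˢ 𝓟 B) :=
      (tendsto_timeArrowFilter_iff.2 ⟨hfar, .of_forall hSig⟩).prodMk
        (tendsto_principal.2 (.of_forall hB))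
    exact MapClusterPt.of_comp hpair hconv.mapClusterPt
  · intro hu₀
    obtain ⟨ψ, hconv, hψ⟩ := hu₀.exists_seq_tendsto
    obtain ⟨hfar, hSig⟩ := tendsto_timeArrowFilter_iff.1 (tendsto_prod_iff'.1 hψ).1
    have hB := tendsto_principal.1 (tendsto_prod_iff'.1 hψ).2
    obtain ⟨N, hN⟩ := eventually_atTop.1 (hSig.and hB)
    refine ⟨fun n => (ψ (n + N)).1, fun n => (ψ (n + N)).2, fun n => (hN _ le_add_self).1,
      (tendsto_add_atTop_iff_nat N).2 hfar, fun n => (hN _ le_add_self).2,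
      (tendsto_add_atTop_iff_nat N).2 hconv⟩

theorem isClosed_omegaSet : IsClosed (omegaSet S Sig B) := by
  have hω : omegaSet S Sig B = {u₀ | MapClusterPt u₀ (timeArrowFilter Sig ×ˢ 𝓟 B) (uncurry S)} :=
    Set.ext fun _ => mem_omegaSet_iff_mapClusterPt
  exact hω ▸ isClosed_setOfPred_clusterPt

theorem IsAttractingSet.tendsto_nhdsSet {Bor : Set (Set Φ)} {K : Set Φ}
    (hattr : IsAttractingSet S Sig Bor K) (hK : IsCompact K) (hB : B ∈ Bor) :
    Tendsto (uncurry S) (timeArrowFilter Sig ×ˢ 𝓟 B) (𝓝ˢ K) := by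
  refine (hasBasis_nhdsSet_thickening hK).tendsto_right_iff.2 fun ε hε => ?_
  obtain ⟨D, -, hD⟩ := hattr B hB ε hε
  filter_upwards [prod_mem_prod (timeArrowFilter_basis.mem_of_mem (i := D) trivial)
    (mem_principal_self B)] with p ⟨⟨hfar, hSig⟩, hpB⟩
  exact hD p.1 hSig hfar ⟨p.2, hpB, rfl⟩

end OmegaLimit

theorem omegaSet_nonempty_compact_subset_general
    {m : ℕ} {Φ : Type*} [MetricSpace Φ]
    (Sig : Set (EuclideanSpace ℝ (Fin m)))
    (S : EuclideanSpace ℝ (Fin m) → Φ → Φ) (Bor : Set (Set Φ))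
    (hcof : ∀ D : ℝ, 0 < D → ∃ h ∈ Sig, infDist h (frontier Sig) ≥ D)
    (K : Set Φ) (hK : IsCompact K) (hKattr : IsAttractingSet S Sig Bor K)
    (B : Set Φ) (hB : B ∈ Bor) (hBne : B.Nonempty) :
    (omegaSet S Sig B).Nonempty ∧ IsCompact (omegaSet S Sig B) ∧ omegaSet S Sig B ⊆ K := by
  have hlim := hKattr.tendsto_nhdsSet hK hB
  have : (timeArrowFilter Sig).NeBot := timeArrowFilter_neBot hcof
  have : (𝓟 B).NeBot := hBne.principal_neBot
  have hsub : omegaSet S Sig B ⊆ K := fun _ hu₀ =>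
    hK.isClosed.mem_of_mapClusterPt_of_tendsto_nhdsSet hlim (mem_omegaSet_iff_mapClusterPt.1 hu₀)
  obtain ⟨u₀, -, hu₀⟩ := hK.exists_mapClusterPt_of_tendsto_nhdsSet hlim
  exact ⟨⟨u₀, mem_omegaSet_iff_mapClusterPt.2 hu₀⟩,
    hK.of_isClosed_subset isClosed_omegaSet hsub, hsub⟩

/-- If the semigroup possesses a compact `(𝔹,Σ)`-attracting set `K`, then for every
nonempty `B ∈ 𝔹` the ω-limit set `ω(B)` is a nonempty compact subset of `K`. -/
theorem omegaSet_nonempty_compact_subset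
    {m : ℕ} {Φ : Type*} [MetricSpace Φ] (hm : 1 ≤ m)
    (C Sig : Set (EuclideanSpace ℝ (Fin m)))
    (S : EuclideanSpace ℝ (Fin m) → Φ → Φ) (Bor : Set (Set Φ))
    (hCclosed : IsClosed C) (hCint : (interior C).Nonempty)
    (hC0 : (0 : EuclideanSpace ℝ (Fin m)) ∈ C)
    (hCadd : ∀ h₁ ∈ C, ∀ h₂ ∈ C, h₁ + h₂ ∈ C)
    (hCcone : ∀ t : ℝ, 0 ≤ t → ∀ h ∈ C, t • h ∈ C)
    (hS0 : S 0 = id)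
    (hSadd : ∀ h₁ ∈ C, ∀ h₂ ∈ C, S (h₁ + h₂) = S h₁ ∘ S h₂)
    (hSigne : Sig.Nonempty) (hSigC : Sig ⊆ C)
    (hfr : frontier C ⊆ frontier Sig)
    (hcof : ∀ D : ℝ, 0 < D → ∃ h ∈ Sig, infDist h (frontier Sig) ≥ D)
    (K : Set Φ) (hK : IsCompact K) (hKattr : IsAttractingSet S Sig Bor K)
    (B : Set Φ) (hB : B ∈ Bor) (hBne : B.Nonempty) :
    (omegaSet S Sig B).Nonempty ∧ IsCompact (omegaSet S Sig B) ∧ omegaSet S Sig B ⊆ K :=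
  omegaSet_nonempty_compact_subset_general Sig S Bor hcof K hK hKattr B hB hBne
end
end

section
/- Assume that S(h) : Φ → Φ is continuous for every h ∈ 𝒞 and that the semigroup possesses a compact (𝔹,Σ)-attracting set K ⊆ Φ. Then for every B ∈ 𝔹 the ω-limit set ω(B) is strictly invariant: S(h)(ω(B)) = ω(B) for every h ∈ 𝒞. -/
open Metric Filter Topology

noncomputable section

/-!
Forward invariance: if `S(gₙ)uₙ → u₀` then `S(h + gₙ)uₙ = S(h)S(gₙ)uₙ → S(h)u₀`, and `h + gₙ`
stays deep inside `Σ` because `gₙ` moves away from its frontier. Backward invariance: write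
`S(gₙ)uₙ = S(h)vₙ` with `vₙ = S(gₙ - h)uₙ`; the points `vₙ` are attracted to the compact set `K`,
so a subsequence converges to some `v₀ ∈ ω(B)`, and continuity of `S(h)` gives `S(h)v₀ = u₀`.
-/

theorem IsPreconnected.subset_of_disjoint_frontier {X : Type*} [TopologicalSpace X]
    {s t : Set X} (ht : IsPreconnected t) (hts : Disjoint t (frontier s))
    (hne : (t ∩ s).Nonempty) : t ⊆ s := by
  have key : ∀ z ∈ t, z ∈ closure s → z ∈ interior s := fun z hzt hzs => by
    by_contra hz
    exact hts.notMem_of_mem_left hzt ⟨hzs, hz⟩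
  refine (ht.subset_of_closure_inter_subset isOpen_interior ?_ ?_).trans interior_subset
  · obtain ⟨z, hzt, hzs⟩ := hne
    exact ⟨z, hzt, key z hzt (subset_closure hzs)⟩
  · rintro z ⟨hzcl, hzt⟩
    exact key z hzt (closure_mono interior_subset hzcl)

theorem mem_of_dist_lt_infDist_frontier {E : Type*} [NormedAddCommGroup E] [NormedSpace ℝ E]
    {s : Set E} {x y : E} (hx : x ∈ s) (hxy : dist y x < infDist x (frontier s)) : y ∈ s := by
  have hx_ball : x ∈ ball x (infDist x (frontier s)) := mem_ball_self (dist_nonneg.trans_lt hxy)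
  refine (convex_ball x _).isPreconnected.subset_of_disjoint_frontier ?_ ⟨x, hx_ball, hx⟩ hxy
  exact Set.disjoint_left.2 fun _ hz => ball_infDist_subset_compl hz

section Translation

variable {ι E : Type*} {l : Filter ι} {g : ι → E}

theorem tendsto_infDist_add_const [SeminormedAddCommGroup E] {s : Set E}
    (hg : Tendsto (fun n => infDist (g n) s) l atTop) (k : E) :
    Tendsto (fun n => infDist (g n + k) s) l atTop := by
  refine tendsto_atTop_mono (fun n => ?_) (tendsto_atTop_add_const_right l (-‖k‖) hg)
  have := infDist_le_infDist_add_dist (s := s) (x := g n) (y := g n + k)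
  rw [dist_self_add_right] at this
  linarith

theorem eventually_add_const_mem [NormedAddCommGroup E] [NormedSpace ℝ E] {s : Set E}
    (hgs : ∀ᶠ n in l, g n ∈ s)
    (hg : Tendsto (fun n => infDist (g n) (frontier s)) l atTop) (k : E) :
    ∀ᶠ n in l, g n + k ∈ s := by
  filter_upwards [hgs, hg.eventually_gt_atTop ‖k‖] with n hn hk
  exact mem_of_dist_lt_infDist_frontier hn (by rwa [dist_self_add_left])

end Translation

theorem IsCompact.exists_subseq_tendsto_of_thickening {X : Type*} [MetricSpace X] {K : Set X}
    (hK : IsCompact K) {v : ℕ → X} (hv : ∀ ε > 0, ∀ᶠ n in atTop, v n ∈ thickening ε K) :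
    ∃ x ∈ K, ∃ φ : ℕ → ℕ, StrictMono φ ∧ Tendsto (v ∘ φ) atTop (𝓝 x) := by
  have hKne : K.Nonempty := by
    obtain ⟨n, hn⟩ := (hv 1 one_pos).exists
    obtain ⟨z, hz, -⟩ := mem_thickening_iff.1 hn
    exact ⟨z, hz⟩
  have hv_dist : Tendsto (fun n => infDist (v n) K) atTop (𝓝 0) := by
    refine Metric.tendsto_nhds.2 fun ε hε => ?_
    filter_upwards [hv ε hε] with n hn
    rwa [Real.dist_0_eq_abs, abs_of_nonneg infDist_nonneg, ← mem_thickening_iff_infDist_lt hKne]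
  choose w hwK hwv using fun n => hK.exists_infDist_eq_dist hKne (v n)
  obtain ⟨x, hx, φ, hφ, hw⟩ := hK.tendsto_subseq hwK
  refine ⟨x, hx, φ, hφ, hw.congr_dist ((hv_dist.comp hφ.tendsto_atTop).congr fun n => ?_)⟩
  simp only [Function.comp_apply, hwv, dist_comm]

section OmegaLimit

variable {m : ℕ} {Φ : Type*} [MetricSpace Φ] {Sig : Set (EuclideanSpace ℝ (Fin m))}
  {S : EuclideanSpace ℝ (Fin m) → Φ → Φ} {B : Set Φ}

theorem mem_omegaSet_of_eventually {h : ℕ → EuclideanSpace ℝ (Fin m)} {u : ℕ → Φ} {u₀ : Φ}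
    (hSig : ∀ᶠ n in atTop, h n ∈ Sig)
    (hfr : Tendsto (fun n => infDist (h n) (frontier Sig)) atTop atTop)
    (hB : ∀ᶠ n in atTop, u n ∈ B) (hu : Tendsto (fun n => S (h n) (u n)) atTop (𝓝 u₀)) :
    u₀ ∈ omegaSet S Sig B := by
  obtain ⟨N, hN⟩ := eventually_atTop.1 (hSig.and hB)
  exact ⟨fun n => h (n + N), fun n => u (n + N), fun n => (hN _ le_add_self).1,
    hfr.comp (tendsto_add_atTop_nat N), fun n => (hN _ le_add_self).2,
    hu.comp (tendsto_add_atTop_nat N)⟩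

theorem IsAttractingSet.eventually_mem_thickening {ι : Type*} {l : Filter ι} {Bor : Set (Set Φ)}
    {K : Set Φ} (hK : IsAttractingSet S Sig Bor K) (hB : B ∈ Bor)
    {h : ι → EuclideanSpace ℝ (Fin m)} {u : ι → Φ} (hSig : ∀ᶠ n in l, h n ∈ Sig)
    (hfr : Tendsto (fun n => infDist (h n) (frontier Sig)) l atTop) (hu : ∀ᶠ n in l, u n ∈ B)
    {ε : ℝ} (hε : 0 < ε) : ∀ᶠ n in l, S (h n) (u n) ∈ thickening ε K := by
  obtain ⟨D, -, hD⟩ := hK B hB ε hε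
  filter_upwards [hSig, hfr.eventually_ge_atTop D, hu] with n hn hnD hnB
  exact hD (h n) hn hnD ⟨u n, hnB, rfl⟩

variable {h₀ : EuclideanSpace ℝ (Fin m)} (hsplit : ∀ g ∈ Sig, S (h₀ + g) = S h₀ ∘ S g)
  (hcont : Continuous (S h₀))
include hsplit hcont

theorem image_omegaSet_subset : S h₀ '' omegaSet S Sig B ⊆ omegaSet S Sig B := by
  rintro - ⟨u₀, ⟨g, u, hgSig, hgfr, huB, hgu⟩, rfl⟩
  have hshift : ∀ n, S (g n + h₀) (u n) = S h₀ (S (g n) (u n)) := fun n => by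
    rw [add_comm, hsplit _ (hgSig n), Function.comp_apply]
  refine mem_omegaSet_of_eventually (h := fun n => g n + h₀)
    (eventually_add_const_mem (.of_forall hgSig) hgfr h₀) (tendsto_infDist_add_const hgfr h₀)
    (.of_forall huB) ?_
  simpa only [hshift, Function.comp_def] using (hcont.tendsto u₀).comp hgu

theorem omegaSet_subset_image {Bor : Set (Set Φ)} {K : Set Φ} (hK : IsCompact K)
    (hKattr : IsAttractingSet S Sig Bor K) (hB : B ∈ Bor) :
    omegaSet S Sig B ⊆ S h₀ '' omegaSet S Sig B := by
  rintro u₀ ⟨g, u, hgSig, hgfr, huB, hgu⟩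
  set p := fun n => g n + -h₀
  have hpSig : ∀ᶠ n in atTop, p n ∈ Sig := eventually_add_const_mem (.of_forall hgSig) hgfr _
  have hpfr : Tendsto (fun n => infDist (p n) (frontier Sig)) atTop atTop :=
    tendsto_infDist_add_const hgfr _
  obtain ⟨v₀, -, φ, hφ, hv⟩ := hK.exists_subseq_tendsto_of_thickening fun ε hε =>
    hKattr.eventually_mem_thickening hB hpSig hpfr (.of_forall huB) hε
  have hv₀ : v₀ ∈ omegaSet S Sig B :=
    mem_omegaSet_of_eventually (hφ.tendsto_atTop.eventually hpSig)
      (hpfr.comp hφ.tendsto_atTop) (.of_forall fun n => huB (φ n)) hv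
  have hsplit_p : ∀ᶠ n in atTop, S h₀ (S (p n) (u n)) = S (g n) (u n) := by
    filter_upwards [hpSig] with n hn
    rw [← Function.comp_apply (f := S h₀), ← hsplit _ hn, add_add_neg_cancel'_right]
  refine ⟨v₀, hv₀, tendsto_nhds_unique ((hcont.tendsto v₀).comp hv) ?_⟩
  exact (hgu.congr' (hsplit_p.mono fun n hn => hn.symm)).comp hφ.tendsto_atTop

end OmegaLimit

theorem omegaSet_strictly_invariant_general
    {m : ℕ} {Φ : Type*} [MetricSpace Φ]
    (C Sig : Set (EuclideanSpace ℝ (Fin m)))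
    (S : EuclideanSpace ℝ (Fin m) → Φ → Φ) (Bor : Set (Set Φ))
    (hSadd : ∀ h₁ ∈ C, ∀ h₂ ∈ C, S (h₁ + h₂) = S h₁ ∘ S h₂)
    (hScont : ∀ h ∈ C, Continuous (S h))
    (hSigC : Sig ⊆ C)
    (K : Set Φ) (hK : IsCompact K) (hKattr : IsAttractingSet S Sig Bor K)
    (B : Set Φ) (hB : B ∈ Bor) :
    ∀ h ∈ C, S h '' (omegaSet S Sig B) = omegaSet S Sig B := by
  intro h hh
  have hsplit : ∀ g ∈ Sig, S (h + g) = S h ∘ S g := fun g hg => hSadd h hh g (hSigC hg)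
  exact (image_omegaSet_subset hsplit (hScont h hh)).antisymm
    (omegaSet_subset_image hsplit (hScont h hh) hK hKattr hB)

/-- If all maps `S h`, `h ∈ 𝒞`, are continuous and the semigroup possesses a compact
`(𝔹,Σ)`-attracting set `K`, then for every `B ∈ 𝔹` the ω-limit set `ω(B)` is strictly
invariant: `S(h)(ω(B)) = ω(B)` for every `h ∈ 𝒞`. -/
theorem omegaSet_strictly_invariant
    {m : ℕ} {Φ : Type*} [MetricSpace Φ] (hm : 1 ≤ m)
    (C Sig : Set (EuclideanSpace ℝ (Fin m)))
    (S : EuclideanSpace ℝ (Fin m) → Φ → Φ) (Bor : Set (Set Φ))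
    (hCclosed : IsClosed C) (hCint : (interior C).Nonempty)
    (hC0 : (0 : EuclideanSpace ℝ (Fin m)) ∈ C)
    (hCadd : ∀ h₁ ∈ C, ∀ h₂ ∈ C, h₁ + h₂ ∈ C)
    (hCcone : ∀ t : ℝ, 0 ≤ t → ∀ h ∈ C, t • h ∈ C)
    (hS0 : S 0 = id)
    (hSadd : ∀ h₁ ∈ C, ∀ h₂ ∈ C, S (h₁ + h₂) = S h₁ ∘ S h₂)
    (hScont : ∀ h ∈ C, Continuous (S h))
    (hSigne : Sig.Nonempty) (hSigC : Sig ⊆ C)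
    (hfr : frontier C ⊆ frontier Sig)
    (hcof : ∀ D : ℝ, 0 < D → ∃ h ∈ Sig, infDist h (frontier Sig) ≥ D)
    (K : Set Φ) (hK : IsCompact K) (hKattr : IsAttractingSet S Sig Bor K)
    (B : Set Φ) (hB : B ∈ Bor) :
    ∀ h ∈ C, S h '' (omegaSet S Sig B) = omegaSet S Sig B :=
  omegaSet_strictly_invariant_general C Sig S Bor hSadd hScont hSigC K hK hKattr B hB
end
end

section
/- Let 𝒜 ⊆ Φ be any (𝔹,Σ)-attractor of the semigroup. Then 𝒦|₀ ⊆ 𝒜, i.e. for every complete bounded trajectory u : ℝ^m → Φ one has u(0) ∈ 𝒜. (No boundedness of an attracting set and no continuity of the maps S(h) is needed for this inclusion.) -/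
open Metric Filter Topology

noncomputable section

/-- `A` is a `(𝔹,Σ)`-attractor: compact, strictly invariant and `(𝔹,Σ)`-attracting. -/
def IsAttractor {m : ℕ} {Φ : Type*} [MetricSpace Φ]
    (S : EuclideanSpace ℝ (Fin m) → Φ → Φ) (C Sig : Set (EuclideanSpace ℝ (Fin m)))
    (Bor : Set (Set Φ)) (A : Set Φ) : Prop :=
  IsCompact A ∧ (∀ h ∈ C, S h '' A = A) ∧ IsAttractingSet S Sig Bor A

/-- `u : ℝ^m → Φ` is a complete bounded trajectory of the semigroup `S` over the cone `C`,
with respect to the bornology `Bor`. -/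
def IsCompleteBoundedTrajectory {m : ℕ} {Φ : Type*} [MetricSpace Φ]
    (S : EuclideanSpace ℝ (Fin m) → Φ → Φ) (C : Set (EuclideanSpace ℝ (Fin m)))
    (Bor : Set (Set Φ)) (u : EuclideanSpace ℝ (Fin m) → Φ) : Prop :=
  (∀ h ∈ C, ∀ s, S h (u s) = u (s + h)) ∧ ∃ Bu ∈ Bor, Set.range u ⊆ Bu

/-! A complete trajectory passes through `u 0` after any time `h ∈ C`, starting from `u (-h)`,
so `u 0` lies in `S h B` for every `h` in the time arrow; the attraction property then puts it
in every `ε`-neighbourhood of `𝒜`, and `𝒜` is closed. -/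

section

variable {m : ℕ} {Φ : Type*} [MetricSpace Φ] {S : EuclideanSpace ℝ (Fin m) → Φ → Φ}

theorem IsAttractingSet.mem_closure_of_forall_mem_image {Sig : Set (EuclideanSpace ℝ (Fin m))}
    {Bor : Set (Set Φ)} {K : Set Φ} (hK : IsAttractingSet S Sig Bor K)
    (hcof : ∀ D : ℝ, 0 < D → ∃ h ∈ Sig, infDist h (frontier Sig) ≥ D)
    {B : Set Φ} (hB : B ∈ Bor) {x : Φ} (hx : ∀ h ∈ Sig, x ∈ S h '' B) :
    x ∈ closure K := by
  rw [closure_eq_iInter_thickening]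
  refine Set.mem_iInter₂.mpr fun ε hε => ?_
  obtain ⟨D, hD, hattr⟩ := hK B hB ε hε
  obtain ⟨h, hSig, hdeep⟩ := hcof D hD
  exact hattr h hSig hdeep (hx h hSig)

theorem IsCompleteBoundedTrajectory.zero_mem_image {C : Set (EuclideanSpace ℝ (Fin m))}
    {Bor : Set (Set Φ)} {u : EuclideanSpace ℝ (Fin m) → Φ}
    (hu : IsCompleteBoundedTrajectory S C Bor u) {h : EuclideanSpace ℝ (Fin m)} (hh : h ∈ C) :
    u 0 ∈ S h '' Set.range u :=
  ⟨u (-h), Set.mem_range_self _, by simpa using hu.1 h hh (-h)⟩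

end

theorem trajectory_zero_mem_attractor_general
    {m : ℕ} {Φ : Type*} [MetricSpace Φ]
    (C Sig : Set (EuclideanSpace ℝ (Fin m)))
    (S : EuclideanSpace ℝ (Fin m) → Φ → Φ) (Bor : Set (Set Φ))
    (hSigC : Sig ⊆ C)
    (hcof : ∀ D : ℝ, 0 < D → ∃ h ∈ Sig, infDist h (frontier Sig) ≥ D)
    (A : Set Φ) (hA : IsAttractor S C Sig Bor A) :
    ∀ u : EuclideanSpace ℝ (Fin m) → Φ,
      IsCompleteBoundedTrajectory S C Bor u → u 0 ∈ A := by
  intro u hu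
  obtain ⟨hAcompact, -, hattr⟩ := hA
  obtain ⟨Bu, hBu, hrange⟩ := hu.2
  rw [← hAcompact.isClosed.closure_eq]
  exact hattr.mem_closure_of_forall_mem_image hcof hBu fun h hh =>
    Set.image_mono hrange (hu.zero_mem_image (hSigC hh))

/-- For any `(𝔹,Σ)`-attractor `𝒜`, the value at time `0` of every complete bounded
trajectory belongs to `𝒜`: `𝒦|₀ ⊆ 𝒜`. -/
theorem trajectory_zero_mem_attractor
    {m : ℕ} {Φ : Type*} [MetricSpace Φ] (hm : 1 ≤ m)
    (C Sig : Set (EuclideanSpace ℝ (Fin m)))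
    (S : EuclideanSpace ℝ (Fin m) → Φ → Φ) (Bor : Set (Set Φ))
    (hCclosed : IsClosed C) (hCint : (interior C).Nonempty)
    (hC0 : (0 : EuclideanSpace ℝ (Fin m)) ∈ C)
    (hCadd : ∀ h₁ ∈ C, ∀ h₂ ∈ C, h₁ + h₂ ∈ C)
    (hCcone : ∀ t : ℝ, 0 ≤ t → ∀ h ∈ C, t • h ∈ C)
    (hS0 : S 0 = id)
    (hSadd : ∀ h₁ ∈ C, ∀ h₂ ∈ C, S (h₁ + h₂) = S h₁ ∘ S h₂)
    (hSigne : Sig.Nonempty) (hSigC : Sig ⊆ C)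
    (hfr : frontier C ⊆ frontier Sig)
    (hcof : ∀ D : ℝ, 0 < D → ∃ h ∈ Sig, infDist h (frontier Sig) ≥ D)
    (A : Set Φ) (hA : IsAttractor S C Sig Bor A) :
    ∀ u : EuclideanSpace ℝ (Fin m) → Φ,
      IsCompleteBoundedTrajectory S C Bor u → u 0 ∈ A :=
  trajectory_zero_mem_attractor_general C Sig S Bor hSigC hcof A hA
end
end

section
/- (Representation formula.) Assume that S(h) : Φ → Φ is continuous for every h ∈ 𝒞, that K ⊆ Φ is a compact (𝔹,Σ)-attracting set with K ∈ 𝔹, and that 𝒜 ⊆ K is a (𝔹,Σ)-attractor of the semigroup. Then 𝒜 = 𝒦|₀, i.e. the attractor consists exactly of the values at time 0 of all complete bounded trajectories. -/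
open Metric Filter Topology

noncomputable section

/-- Representation formula: if the maps `S h` are continuous, `K` is a compact
`(𝔹,Σ)`-attracting set belonging to `𝔹`, and `𝒜 ⊆ K` is a `(𝔹,Σ)`-attractor, then
`𝒜 = 𝒦|₀`, the set of values at time `0` of all complete bounded trajectories. -/
theorem attractor_eq_trajectories_at_zero
    {m : ℕ} {Φ : Type*} [MetricSpace Φ] (hm : 1 ≤ m)
    (C Sig : Set (EuclideanSpace ℝ (Fin m)))
    (S : EuclideanSpace ℝ (Fin m) → Φ → Φ) (Bor : Set (Set Φ))
    (hCclosed : IsClosed C) (hCint : (interior C).Nonempty)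
    (hC0 : (0 : EuclideanSpace ℝ (Fin m)) ∈ C)
    (hCadd : ∀ h₁ ∈ C, ∀ h₂ ∈ C, h₁ + h₂ ∈ C)
    (hCcone : ∀ t : ℝ, 0 ≤ t → ∀ h ∈ C, t • h ∈ C)
    (hS0 : S 0 = id)
    (hSadd : ∀ h₁ ∈ C, ∀ h₂ ∈ C, S (h₁ + h₂) = S h₁ ∘ S h₂)
    (hScont : ∀ h ∈ C, Continuous (S h))
    (hSigne : Sig.Nonempty) (hSigC : Sig ⊆ C)
    (hfr : frontier C ⊆ frontier Sig)
    (hcof : ∀ D : ℝ, 0 < D → ∃ h ∈ Sig, infDist h (frontier Sig) ≥ D)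
    (K : Set Φ) (hK : IsCompact K) (hKattr : IsAttractingSet S Sig Bor K)
    (hKBor : K ∈ Bor)
    (A : Set Φ) (hAK : A ⊆ K) (hA : IsAttractor S C Sig Bor A) :
    A = {u₀ | ∃ u : EuclideanSpace ℝ (Fin m) → Φ,
      IsCompleteBoundedTrajectory S C Bor u ∧ u 0 = u₀} := by
  classical
  obtain ⟨e, he⟩ := hCint
  have heC : e ∈ C := interior_subset he
  have hinv := hA.2.1
  -- existence of n with s + n•e ∈ C
  have hex : ∀ s : EuclideanSpace ℝ (Fin m), ∃ n : ℕ, s + (n : ℝ) • e ∈ C := by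
    intro s
    obtain ⟨δ, hδ, hball⟩ := Metric.isOpen_iff.mp isOpen_interior e he
    obtain ⟨n, hn⟩ := exists_nat_gt (‖s‖ / δ)
    have hnpos : 0 < (n : ℝ) := lt_of_le_of_lt (div_nonneg (norm_nonneg s) hδ.le) hn
    have hx : e + (n : ℝ)⁻¹ • s ∈ C := by
      apply interior_subset
      apply hball
      rw [mem_ball, dist_eq_norm]
      have h1 : ‖e + (n : ℝ)⁻¹ • s - e‖ = (n : ℝ)⁻¹ * ‖s‖ := by
        rw [add_sub_cancel_left, norm_smul, Real.norm_eq_abs,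
          abs_of_pos (inv_pos.mpr hnpos)]
      rw [h1]
      have h2 : ‖s‖ < n * δ := by
        rw [div_lt_iff₀ hδ] at hn; exact hn
      rw [inv_mul_lt_iff₀ hnpos]
      linarith [mul_comm (n : ℝ) δ]
    have h3 := hCcone (n : ℝ) hnpos.le _ hx
    rw [smul_add, smul_inv_smul₀ (ne_of_gt hnpos)] at h3
    exact ⟨n, by rwa [add_comm] at h3⟩
  ext x
  constructor
  · -- A ⊆ trajectories at 0
    intro hx
    have hback : ∀ p : Φ, p ∈ A → ∃ y, y ∈ A ∧ S e y = p := by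
      intro p hp
      rw [← hinv e heC] at hp
      obtain ⟨y, hy, hyp⟩ := hp
      exact ⟨y, hy, hyp⟩
    let f : {p : Φ // p ∈ A} → {p : Φ // p ∈ A} :=
      fun p => ⟨(hback p.1 p.2).choose, (hback p.1 p.2).choose_spec.1⟩
    let seq : ℕ → Φ := fun n => (f^[n] ⟨x, hx⟩ : {p : Φ // p ∈ A}).1
    have hseqA : ∀ n, seq n ∈ A := fun n => (f^[n] ⟨x, hx⟩).2
    have hseq : ∀ n, S e (seq (n + 1)) = seq n := by
      intro n
      have h1 : f^[n + 1] (⟨x, hx⟩ : {p : Φ // p ∈ A}) = f (f^[n] ⟨x, hx⟩) :=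
        Function.iterate_succ_apply' f n _
      show S e (f^[n+1] (⟨x, hx⟩ : {p : Φ // p ∈ A})).1 = _
      rw [h1]
      exact (hback _ (f^[n] ⟨x, hx⟩).2).choose_spec.2
    have hmono : ∀ (s : EuclideanSpace ℝ (Fin m)) (n k : ℕ),
        s + (n : ℝ) • e ∈ C → s + ((n + k : ℕ) : ℝ) • e ∈ C := by
      intro s n k hn
      have heq : s + ((n + k : ℕ) : ℝ) • e = (s + (n : ℝ) • e) + (k : ℝ) • e := by
        push_cast [add_smul]; abel
      rw [heq]
      exact hCadd _ hn _ (hCcone _ (Nat.cast_nonneg k) e heC)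
    have hconst : ∀ (s : EuclideanSpace ℝ (Fin m)) (n k : ℕ),
        s + (n : ℝ) • e ∈ C →
        S (s + (n : ℝ) • e) (seq n) = S (s + ((n + k : ℕ) : ℝ) • e) (seq (n + k)) := by
      intro s n k hn
      induction k with
      | zero => simp
      | succ k ih =>
        rw [ih]
        have h1 : s + ((n + k : ℕ) : ℝ) • e ∈ C := hmono s n k hn
        have heq : s + ((n + k + 1 : ℕ) : ℝ) • e = (s + ((n + k : ℕ) : ℝ) • e) + e := by
          push_cast [add_smul, one_smul]; abel
        rw [show n + (k + 1) = (n + k) + 1 from rfl, heq,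
          hSadd _ h1 e heC, Function.comp_apply, hseq (n + k)]
    let u : EuclideanSpace ℝ (Fin m) → Φ :=
      fun s => S (s + ((Nat.find (hex s) : ℕ) : ℝ) • e) (seq (Nat.find (hex s)))
    have hu : ∀ (s : EuclideanSpace ℝ (Fin m)) (n : ℕ), s + (n : ℝ) • e ∈ C →
        u s = S (s + (n : ℝ) • e) (seq n) := by
      intro s n hn
      have hN := Nat.find_spec (hex s)
      have hle : Nat.find (hex s) ≤ n := Nat.find_min' (hex s) hn
      obtain ⟨k, rfl⟩ := Nat.exists_eq_add_of_le hle
      exact hconst s (Nat.find (hex s)) k hN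
    have hrangeA : ∀ s, u s ∈ A := by
      intro s
      obtain ⟨n, hn⟩ := hex s
      rw [hu s n hn, ← hinv _ hn]
      exact Set.mem_image_of_mem _ (hseqA n)
    have htraj : ∀ h ∈ C, ∀ s, S h (u s) = u (s + h) := by
      intro h hh s
      obtain ⟨n, hn⟩ := hex s
      have hn' : (s + h) + (n : ℝ) • e ∈ C := by
        have := hCadd _ hn h hh
        rwa [add_right_comm] at this
      calc S h (u s) = S h (S (s + (n : ℝ) • e) (seq n)) := by rw [hu s n hn]
        _ = S (h + (s + (n : ℝ) • e)) (seq n) := by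
            rw [hSadd h hh _ hn, Function.comp_apply]
        _ = S ((s + h) + (n : ℝ) • e) (seq n) := by
            rw [show h + (s + (n : ℝ) • e) = (s + h) + (n : ℝ) • e by abel]
        _ = u (s + h) := (hu (s + h) n hn').symm
    have hu0 : u 0 = x := by
      have h0 : (0 : EuclideanSpace ℝ (Fin m)) + ((0 : ℕ) : ℝ) • e ∈ C := by
        simpa using hC0
      rw [hu 0 0 h0]
      have : (0 : EuclideanSpace ℝ (Fin m)) + ((0 : ℕ) : ℝ) • e = 0 := by simp
      rw [this, hS0]
      rfl
    exact ⟨u, ⟨htraj, K, hKBor, by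
      rintro y ⟨s, rfl⟩
      exact hAK (hrangeA s)⟩, hu0⟩
  · -- trajectories at 0 ⊆ A
    rintro ⟨u, ⟨htraj, Bu, hBu, hrange⟩, hu0⟩
    rw [← hA.1.isClosed.closure_eq]
    rw [Metric.mem_closure_iff]
    intro ε hε
    obtain ⟨D, hD, hattr⟩ := hA.2.2 Bu hBu ε hε
    obtain ⟨h, hhSig, hhD⟩ := hcof D hD
    have hhC := hSigC hhSig
    have hkey : S h (u (-h)) = u 0 := by
      rw [htraj h hhC (-h), neg_add_cancel]
    have hmem : x ∈ thickening ε A := by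
      rw [← hu0, ← hkey]
      exact hattr h hhSig hhD ⟨u (-h), hrange (Set.mem_range_self _), rfl⟩
    rw [Metric.mem_thickening_iff] at hmem
    obtain ⟨y, hy, hd⟩ := hmem
    exact ⟨y, hy, hd⟩
end
end

section
/- Let y : ℝ → ℝ be differentiable on [0,∞) and satisfy the ODE y′(t) = y(t) − y(t)³ for all t ≥ 0. Then |y(t)| ≤ 2 for all t ≥ 1; in particular the bound for t ≥ 1 is independent of the initial value y(0). -/
open Set

/-- Dissipative estimate for the ODE `y' = y - y³`: every solution defined on `[0,∞)`
satisfies `|y(t)| ≤ 2` for all `t ≥ 1`, uniformly in the initial value `y(0)`. -/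
theorem ode_dissipative_estimate (y : ℝ → ℝ)
    (hy : ∀ t ∈ Ici (0 : ℝ), HasDerivWithinAt y (y t - (y t) ^ 3) (Ici (0 : ℝ)) t) :
    ∀ t : ℝ, 1 ≤ t → |y t| ≤ 2 := by
  intro t ht
  by_contra hcon
  push_neg at hcon
  have ht0 : (0:ℝ) < t := lt_of_lt_of_le one_pos ht
  have hyt : 4 < y t ^ 2 := by
    have := sq_abs (y t)
    nlinarith [abs_nonneg (y t)]
  have hcont : ContinuousOn y (Ici (0:ℝ)) := fun s hs => (hy s hs).continuousWithinAt
  have hderiv : ∀ x : ℝ, 0 < x → HasDerivAt y (y x - y x ^ 3) x := by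
    intro x hx
    exact (hy x (le_of_lt hx)).hasDerivAt (Ici_mem_nhds hx)
  have hcontsq : ContinuousOn (fun s => y s ^ 2) (Icc (0:ℝ) t) :=
    ((hcont.mono (fun s hs => hs.1)).pow 2)
  -- Step 1: y s ^ 2 > 4 on all of [0, t]
  have hu : ∀ s ∈ Icc (0:ℝ) t, 4 < y s ^ 2 := by
    by_contra hS
    push_neg at hS
    obtain ⟨s₀, hs₀, hs₀4⟩ := hS
    set S : Set ℝ := {s ∈ Icc (0:ℝ) t | y s ^ 2 ≤ 4} with hSdef
    have hne : S.Nonempty := ⟨s₀, hs₀, hs₀4⟩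
    have hbdd : BddAbove S := BddAbove.mono (fun s hs => hs.1) (bddAbove_Icc)
    have hclosed : IsClosed S := by
      have : S = Icc (0:ℝ) t ∩ (fun s => y s ^ 2) ⁻¹' Iic 4 := by
        ext s; simp [hSdef, and_comm]
      rw [this]
      exact hcontsq.preimage_isClosed_of_isClosed isClosed_Icc isClosed_Iic
    have hmem : sSup S ∈ S := hclosed.csSup_mem hne hbdd
    set c := sSup S with hc
    have hcIcc : c ∈ Icc (0:ℝ) t := hmem.1
    have hc4 : y c ^ 2 ≤ 4 := hmem.2
    have hct : c < t := lt_of_le_of_ne hcIcc.2 (by intro h; rw [h] at hc4; linarith)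
    have hanti : StrictAntiOn (fun s => y s ^ 2) (Icc c t) := by
      apply strictAntiOn_of_deriv_neg (convex_Icc c t)
        (hcontsq.mono (Icc_subset_Icc hcIcc.1 le_rfl))
      intro x hx
      rw [interior_Icc] at hx
      have hx0 : 0 < x := lt_of_le_of_lt hcIcc.1 hx.1
      have hyx : HasDerivAt (fun s => y s ^ 2) (2 * y x * (y x - y x ^ 3)) x := by
        have h := (hderiv x hx0).fun_pow 2
        exact h.congr_deriv (by push_cast; ring)
      rw [hyx.deriv]
      have hx4 : 4 < y x ^ 2 := by
        by_contra hle
        push_neg at hle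
        have : x ∈ S := ⟨⟨le_of_lt hx0, le_of_lt hx.2⟩, hle⟩
        exact absurd (le_csSup hbdd this) (not_le.mpr hx.1)
      nlinarith
    have := hanti (left_mem_Icc.mpr (le_of_lt hct)) (right_mem_Icc.mpr (le_of_lt hct)) hct
    simp only at this
    linarith
  -- Step 2: w = (y²)⁻¹ grows at rate ≥ 3/2 on [0,t]
  have hmono : MonotoneOn (fun s => (y s ^ 2)⁻¹ - 3/2 * s) (Icc (0:ℝ) t) := by
    apply monotoneOn_of_deriv_nonneg (convex_Icc 0 t)
    · exact (hcontsq.inv₀ (fun s hs => by nlinarith [hu s hs])).sub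
        (continuousOn_const.mul continuousOn_id)
    · intro x hx
      rw [interior_Icc] at hx
      have hx4 : 4 < y x ^ 2 := hu x ⟨le_of_lt hx.1, le_of_lt hx.2⟩
      have hne : y x ^ 2 ≠ 0 := by nlinarith
      have h1 : HasDerivAt (fun s => y s ^ 2) (2 * y x * (y x - y x ^ 3)) x := by
        have h := (hderiv x hx.1).fun_pow 2
        exact h.congr_deriv (by push_cast; ring)
      have h2 : HasDerivAt (fun s => (y s ^ 2)⁻¹ - 3/2 * s)
          (-(2 * y x * (y x - y x ^ 3)) / (y x ^ 2) ^ 2 - 3/2) x :=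
        (h1.inv hne).sub (by simpa using (hasDerivAt_id x).const_mul (3/2:ℝ))
      exact (h2.differentiableAt).differentiableWithinAt
    · intro x hx
      rw [interior_Icc] at hx
      have hx4 : 4 < y x ^ 2 := hu x ⟨le_of_lt hx.1, le_of_lt hx.2⟩
      have hne : y x ^ 2 ≠ 0 := by nlinarith
      have h1 : HasDerivAt (fun s => y s ^ 2) (2 * y x * (y x - y x ^ 3)) x := by
        have h := (hderiv x hx.1).fun_pow 2
        exact h.congr_deriv (by push_cast; ring)
      have h2 : HasDerivAt (fun s => (y s ^ 2)⁻¹ - 3/2 * s)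
          (-(2 * y x * (y x - y x ^ 3)) / (y x ^ 2) ^ 2 - 3/2) x :=
        (h1.inv hne).sub (by simpa using (hasDerivAt_id x).const_mul (3/2:ℝ))
      rw [h2.deriv]
      rw [div_sub' (by positivity), le_div_iff₀ (by positivity)]
      ring_nf
      nlinarith [sq_nonneg (y x), sq_nonneg (y x ^ 2)]
  have h0 : (0:ℝ) ∈ Icc (0:ℝ) t := left_mem_Icc.mpr (le_of_lt ht0)
  have hT : t ∈ Icc (0:ℝ) t := right_mem_Icc.mpr (le_of_lt ht0)
  have hkey := hmono h0 hT (le_of_lt ht0)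
  simp only at hkey
  have h04 : 4 < y 0 ^ 2 := hu 0 h0
  have hinv0 : 0 < (y 0 ^ 2)⁻¹ := by positivity
  have hinvt : (y t ^ 2)⁻¹ < 1/4 := by
    rw [inv_lt_comm₀ (by nlinarith) (by norm_num)]
    linarith
  linarith
end

section
/- Let N ∈ ℕ and let u : ℝ → ℝ be a bounded, twice differentiable function satisfying u″(x) = u(x) · ∏_{k=1}^{N} (u(x) − k)² for all x ∈ ℝ. Then u is constant and equal to one of the values 0, 1, …, N; i.e. there exists j ∈ {0, 1, …, N} with u(x) = j for all x ∈ ℝ. -/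
open Finset

/-- Every bounded, twice differentiable solution `u : ℝ → ℝ` of
`u'' = u · ∏_{k=1}^{N} (u - k)²` is a constant equal to one of `0, 1, …, N`. -/
theorem bounded_entire_solution_1d_constant (N : ℕ) (u : ℝ → ℝ)
    (hbound : ∃ M : ℝ, ∀ x : ℝ, |u x| ≤ M)
    (hdiff : Differentiable ℝ u) (hdiff2 : Differentiable ℝ (deriv u))
    (heq : ∀ x : ℝ,
      deriv (deriv u) x = u x * ∏ k ∈ Finset.Icc 1 N, (u x - (k : ℝ)) ^ 2) :
    ∃ j : ℕ, j ≤ N ∧ ∀ x : ℝ, u x = (j : ℝ) := by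
  obtain ⟨M, hM⟩ := hbound
  set U : ℝ → ℝ := fun x => u x ^ 2 with hUdef
  set V : ℝ → ℝ := fun x => 2 * u x * deriv u x with hVdef
  have hUd : ∀ x, HasDerivAt U (V x) x := fun x => by
    simpa [V, mul_comm, mul_assoc] using ((hdiff x).hasDerivAt.fun_pow 2)
  have hVd : ∀ x, HasDerivAt V (2 * ((deriv u x) ^ 2 + u x * deriv (deriv u) x)) x := by
    intro x
    have h := (((hdiff x).hasDerivAt.fun_mul (hdiff2 x).hasDerivAt).const_mul (2 : ℝ))
    have hVe : V = fun y => 2 * (u y * deriv u y) := by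
      funext y; simp [hVdef, mul_assoc]
    rw [hVe]
    exact h.congr_deriv (by ring)
  have hnn : ∀ x, 0 ≤ u x * deriv (deriv u) x := fun x => by
    rw [heq x, ← mul_assoc, ← sq]
    positivity
  have hVmono : Monotone V := by
    apply monotone_of_deriv_nonneg (fun x => (hVd x).differentiableAt)
    intro x
    rw [(hVd x).deriv]
    nlinarith [hnn x, sq_nonneg (deriv u x)]
  have hUb : ∀ x, U x ≤ M ^ 2 := fun x => by
    have : |u x| ^ 2 ≤ M ^ 2 := pow_le_pow_left₀ (abs_nonneg _) (hM x) 2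
    simpa [U, sq_abs] using this
  have hUnn : ∀ x, 0 ≤ U x := fun x => sq_nonneg _
  -- the function y ↦ U y - V a * y
  have hgd : ∀ (a x : ℝ), HasDerivAt (fun y => U y - V a * y) (V x - V a) x := by
    intro a x
    simpa using (hUd x).fun_sub ((hasDerivAt_id x).const_mul (V a))
  -- V vanishes identically
  have hV0 : ∀ a, V a = 0 := by
    intro a
    by_contra h
    obtain ⟨x, hxdef⟩ : ∃ x : ℝ, x = a + (M ^ 2 + 1) / V a := ⟨_, rfl⟩
    have hVax : V a * (x - a) = M ^ 2 + 1 := by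
      rw [hxdef]
      field_simp
      ring
    have hkey : U a - V a * a ≤ U x - V a * x := by
      rcases lt_or_gt_of_ne h with hneg | hpos
      · -- V a < 0 : antitone on Iic a, x ≤ a
        have hx_le : x ≤ a := by
          have : (M ^ 2 + 1) / V a < 0 :=
            div_neg_of_pos_of_neg (by positivity) hneg
          linarith
        have hanti : AntitoneOn (fun y => U y - V a * y) (Set.Iic a) := by
          apply antitoneOn_of_deriv_nonpos (convex_Iic a)
          · exact (Differentiable.continuous fun y => (hgd a y).differentiableAt).continuousOn
          · exact fun y _ => (hgd a y).differentiableAt.differentiableWithinAt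
          · intro y hy
            rw [(hgd a y).deriv]
            have : V y ≤ V a := hVmono (le_of_lt (by simpa using hy))
            linarith
        exact hanti (Set.mem_Iic.2 hx_le) (Set.mem_Iic.2 le_rfl) hx_le
      · -- V a > 0 : monotone on Ici a, x ≥ a
        have hx_ge : a ≤ x := by
          have : 0 < (M ^ 2 + 1) / V a := div_pos (by positivity) hpos
          linarith
        have hmono : MonotoneOn (fun y => U y - V a * y) (Set.Ici a) := by
          apply monotoneOn_of_deriv_nonneg (convex_Ici a)
          · exact (Differentiable.continuous fun y => (hgd a y).differentiableAt).continuousOn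
          · exact fun y _ => (hgd a y).differentiableAt.differentiableWithinAt
          · intro y hy
            rw [(hgd a y).deriv]
            have : V a ≤ V y := hVmono (le_of_lt (by simpa using hy))
            linarith
        exact hmono (Set.mem_Ici.2 le_rfl) (Set.mem_Ici.2 hx_ge) hx_ge
    have h1 := hUb x
    have h2 := hUnn a
    nlinarith
  -- hence u' ≡ 0
  have hVfun : V = fun _ => (0 : ℝ) := funext hV0
  have hd0 : ∀ x, deriv u x = 0 := by
    intro x
    have hdV : deriv V x = 0 := by rw [hVfun]; simp
    have h1 := (hVd x).deriv
    rw [hdV] at h1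
    have h2 := hnn x
    have h3 : (deriv u x) ^ 2 = 0 := by nlinarith
    exact pow_eq_zero_iff two_ne_zero |>.1 h3
  have hconst : ∀ x y, u x = u y := is_const_of_deriv_eq_zero hdiff hd0
  have hderiv_u : deriv u = fun _ => (0 : ℝ) := funext hd0
  have h0 : u 0 * ∏ k ∈ Finset.Icc 1 N, (u 0 - (k : ℝ)) ^ 2 = 0 := by
    rw [← heq 0, hderiv_u]
    simp
  rcases mul_eq_zero.1 h0 with hc | hp
  · exact ⟨0, Nat.zero_le _, fun x => by rw [hconst x 0, hc]; simp⟩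
  · obtain ⟨k, hk, hk2⟩ := Finset.prod_eq_zero_iff.1 hp
    have hck : u 0 = (k : ℝ) := by
      have := pow_eq_zero_iff two_ne_zero |>.1 hk2
      linarith
    exact ⟨k, (Finset.mem_Icc.1 hk).2, fun x => by rw [hconst x 0, hck]⟩
end

section
/- Let N ∈ ℕ and let u : ℝ² → ℝ be a bounded, twice continuously differentiable function satisfying Δu(x) = u(x) · ∏_{k=1}^{N} (u(x) − k)² for all x ∈ ℝ². Then u is constant and equal to one of the values 0, 1, …, N; i.e. there exists j ∈ {0, 1, …, N} with u(x) = j for all x ∈ ℝ². In other words, the set 𝒦 of bounded entire solutions of this elliptic equation in dimension 2 equals {0, 1, …, N}. -/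
noncomputable section
open Metric Real Set Filter

/-- The Laplacian of `u : ℝ^d → ℝ` as the sum of its second partial derivatives
(in an orthonormal coordinate basis of Euclidean space). -/
def euclideanLaplacian {d : ℕ} (u : EuclideanSpace ℝ (Fin d) → ℝ)
    (x : EuclideanSpace ℝ (Fin d)) : ℝ :=
  ∑ i : Fin d,
    fderiv ℝ (fun y => fderiv ℝ u y (EuclideanSpace.single i 1)) x
      (EuclideanSpace.single i 1)

abbrev E2 := EuclideanSpace ℝ (Fin 2)

def ee (i : Fin 2) : E2 := EuclideanSpace.single i 1

def prj (i : Fin 2) : E2 →L[ℝ] ℝ := EuclideanSpace.proj i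

lemma norm_sq_eq (y : E2) : ‖y‖^2 = (y 0)^2 + (y 1)^2 := by
  rw [EuclideanSpace.norm_eq, Real.sq_sqrt (by positivity)]
  simp [Fin.sum_univ_two, sq_abs]

lemma dist_sq_eq (y p : E2) : (dist y p)^2 = (y 0 - p 0)^2 + (y 1 - p 1)^2 := by
  rw [dist_eq_norm, norm_sq_eq]
  simp [PiLp.sub_apply]

lemma prj_apply (i : Fin 2) (y : E2) : prj i y = y i := rfl

lemma prj_ee (i j : Fin 2) : prj j (ee i) = if i = j then 1 else 0 := by
  simp [prj, ee, EuclideanSpace.single_apply, eq_comm]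

lemma hasFDerivAt_coord (i : Fin 2) (y : E2) :
    HasFDerivAt (fun z : E2 => z i) (prj i) y := (prj i).hasFDerivAt

/-- quadratic `‖y - p‖²` written in coordinates -/
def qq (p y : E2) : ℝ := (y 0 - p 0)^2 + (y 1 - p 1)^2

lemma qq_eq_dist (p y : E2) : qq p y = (dist y p)^2 := (dist_sq_eq y p).symm

lemma qq_zero (y : E2) : qq 0 y = ‖y‖^2 := by
  have : dist y 0 = ‖y‖ := by simp
  rw [qq_eq_dist, this]

lemma qq_pos {p y : E2} (h : y ≠ p) : 0 < qq p y := by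
  rw [qq_eq_dist]; have := dist_pos.mpr h; positivity

/-- derivative of `qq p` -/
def Dq (p y : E2) : E2 →L[ℝ] ℝ := (2*(y 0 - p 0)) • prj 0 + (2*(y 1 - p 1)) • prj 1

lemma Dq_ee (p y : E2) (i : Fin 2) : Dq p y (ee i) = 2 * (y i - p i) := by
  fin_cases i <;>
    simp [Dq, ContinuousLinearMap.add_apply, ContinuousLinearMap.smul_apply, prj_ee]

lemma hasFDerivAt_qq (p y : E2) : HasFDerivAt (qq p) (Dq p y) y := by
  have hc : ∀ i : Fin 2, HasFDerivAt (fun z : E2 => z i - p i) (prj i) y :=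
    fun i => (hasFDerivAt_coord i y).sub_const (p i)
  have h0 := (hc 0).mul (hc 0)
  have h1 := (hc 1).mul (hc 1)
  have h := h0.add h1
  have heq : (fun z : E2 => (z 0 - p 0) * (z 0 - p 0) + (z 1 - p 1) * (z 1 - p 1)) = qq p := by
    funext z; simp [qq]; ring
  have h : HasFDerivAt (qq p) ((y 0 - p 0) • prj 0 + (y 0 - p 0) • prj 0 +
      ((y 1 - p 1) • prj 1 + (y 1 - p 1) • prj 1)) y := by rw [← heq]; exact h
  convert h using 1
  ext v
  simp [Dq, ContinuousLinearMap.add_apply, ContinuousLinearMap.smul_apply]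
  ring

lemma hasFDerivAt_log_qq (p : E2) {y : E2} (h : y ≠ p) :
    HasFDerivAt (fun z => Real.log (qq p z)) ((qq p y)⁻¹ • Dq p y) y := by
  have := (Real.hasDerivAt_log (ne_of_gt (qq_pos h))).comp_hasFDerivAt y (hasFDerivAt_qq p y)
  exact this

lemma laplacian_eq {w : E2 → ℝ} {s : Set E2} (hs : IsOpen s) {x : E2} (hx : x ∈ s)
    (D : E2 → E2 →L[ℝ] ℝ) (Dg : Fin 2 → E2 →L[ℝ] ℝ)
    (hD : ∀ y ∈ s, HasFDerivAt w (D y) y)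
    (hDg : ∀ i, HasFDerivAt (fun z => D z (ee i)) (Dg i) x) :
    euclideanLaplacian w x = ∑ i, Dg i (ee i) := by
  unfold euclideanLaplacian
  refine Finset.sum_congr rfl fun i _ => ?_
  have hev : (fun y => fderiv ℝ w y (EuclideanSpace.single i (1:ℝ))) =ᶠ[nhds x]
      (fun z => D z (ee i)) := by
    filter_upwards [hs.mem_nhds hx] with y hy
    rw [(hD y hy).fderiv]; rfl
  rw [hev.fderiv_eq, (hDg i).fderiv]
  rfl

lemma norm_ee (i : Fin 2) : ‖ee i‖ = 1 := by
  simp [ee, EuclideanSpace.norm_single]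

lemma not_isLocalMax_of_pos {w : E2 → ℝ} {s : Set E2} (hs : IsOpen s) {x₀ : E2} (hx₀ : x₀ ∈ s)
    (D : E2 → E2 →L[ℝ] ℝ) (Dg : Fin 2 → E2 → E2 →L[ℝ] ℝ)
    (hD : ∀ y ∈ s, HasFDerivAt w (D y) y)
    (hDg : ∀ i, ∀ y ∈ s, HasFDerivAt (fun z => D z (ee i)) (Dg i y) y)
    (hcont : ∀ i, ContinuousOn (fun y => Dg i y (ee i)) s)
    (hpos : 0 < ∑ i, Dg i x₀ (ee i)) : ¬ IsLocalMax w x₀ := by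
  intro hmax
  -- pick a direction with positive second derivative
  obtain ⟨i, hi⟩ : ∃ i : Fin 2, 0 < Dg i x₀ (ee i) := by
    by_contra hcon
    push_neg at hcon
    have : ∑ i : Fin 2, Dg i x₀ (ee i) ≤ 0 := by
      rw [Fin.sum_univ_two]
      have := hcon 0; have := hcon 1; linarith
    linarith
  -- positivity on a ball
  have hca : ContinuousAt (fun y => Dg i y (ee i)) x₀ :=
    (hcont i).continuousAt (hs.mem_nhds hx₀)
  have hev : ∀ᶠ y in nhds x₀, y ∈ s ∧ 0 < Dg i y (ee i) := by
    filter_upwards [hs.mem_nhds hx₀, continuousAt_const.eventually_lt hca hi] with y h1 h2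
      using ⟨h1, h2⟩
  obtain ⟨ρ, hρ, hball⟩ := Metric.eventually_nhds_iff.mp hev
  set L : ℝ → E2 := fun t => x₀ + t • ee i with hLdef
  have hLmem : ∀ t : ℝ, |t| < ρ → L t ∈ s ∧ 0 < Dg i (L t) (ee i) := by
    intro t ht
    apply hball
    have : dist (L t) x₀ = |t| := by
      simp [hLdef, dist_eq_norm, norm_smul, norm_ee]
    rwa [this]
  have hL : ∀ t : ℝ, HasDerivAt L (ee i) t := by
    intro t
    rw [hLdef]
    simpa using ((hasDerivAt_id t).smul_const (ee i)).const_add x₀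
  set g : ℝ → ℝ := fun t => w (L t) with hgdef
  set g1 : ℝ → ℝ := fun t => D (L t) (ee i) with hg1def
  have hg : ∀ t : ℝ, |t| < ρ → HasDerivAt g (g1 t) t := by
    intro t ht
    exact (hD (L t) (hLmem t ht).1).comp_hasDerivAt t (hL t)
  have hg1 : ∀ t : ℝ, |t| < ρ → HasDerivAt g1 (Dg i (L t) (ee i)) t := by
    intro t ht
    exact (hDg i (L t) (hLmem t ht).1).comp_hasDerivAt t (hL t)
  -- local max data
  obtain ⟨η, hη, hmaxball⟩ := Metric.eventually_nhds_iff.mp hmax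
  have habs : ∀ t : ℝ, |t| < η → w (L t) ≤ w x₀ := by
    intro t ht
    apply hmaxball
    have : dist (L t) x₀ = |t| := by
      simp [hLdef, dist_eq_norm, norm_smul, norm_ee]
    rwa [this]
  have hg10 := le_or_gt 0 (g1 0)
  -- strict monotonicity of g1 on Ioo (-ρ) ρ
  have hmono : StrictMonoOn g1 (Ioo (-ρ) ρ) := by
    apply strictMonoOn_of_deriv_pos (convex_Ioo _ _)
    · intro t ht
      have ht' : |t| < ρ := abs_lt.mpr ⟨ht.1, ht.2⟩
      exact (hg1 t ht').continuousAt.continuousWithinAt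
    · intro t ht
      rw [interior_Ioo] at ht
      have ht' : |t| < ρ := abs_lt.mpr ⟨ht.1, ht.2⟩
      rw [(hg1 t ht').deriv]
      exact (hLmem t ht').2
  rcases hg10 with hpos0 | hneg0
  · -- g strictly increasing on [0, ρ)
    have hmg : StrictMonoOn g (Ico 0 ρ) := by
      apply strictMonoOn_of_deriv_pos (convex_Ico _ _)
      · intro t ht
        have ht' : |t| < ρ := abs_lt.mpr ⟨by linarith [ht.1], ht.2⟩
        exact (hg t ht').continuousAt.continuousWithinAt
      · intro t ht
        rw [interior_Ico] at ht
        have ht' : |t| < ρ := abs_lt.mpr ⟨by linarith [ht.1], ht.2⟩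
        rw [(hg t ht').deriv]
        have h0mem : (0:ℝ) ∈ Ioo (-ρ) ρ := by constructor <;> linarith
        have htmem : t ∈ Ioo (-ρ) ρ := ⟨by linarith [ht.1], ht.2⟩
        have := hmono h0mem htmem ht.1
        linarith
    set t₀ : ℝ := min (ρ/2) (η/2) with ht₀def
    have ht₀pos : 0 < t₀ := by positivity
    have h1 : t₀ ∈ Ico (0:ℝ) ρ := ⟨le_of_lt ht₀pos, by
      have : t₀ ≤ ρ/2 := min_le_left _ _; linarith⟩
    have h2 : (0:ℝ) ∈ Ico (0:ℝ) ρ := ⟨le_refl _, hρ⟩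
    have := hmg h2 h1 ht₀pos
    have habs' : w (L t₀) ≤ w x₀ := by
      apply habs
      rw [abs_of_pos ht₀pos]
      have : t₀ ≤ η/2 := min_le_right _ _; linarith
    have hL0 : g 0 = w x₀ := by simp [hgdef, hLdef]
    rw [hL0] at this
    exact absurd this (not_lt.mpr habs')
  · -- g strictly decreasing on (-ρ, 0]
    have hmg : StrictAntiOn g (Ioc (-ρ) 0) := by
      apply strictAntiOn_of_deriv_neg (convex_Ioc _ _)
      · intro t ht
        have ht' : |t| < ρ := abs_lt.mpr ⟨ht.1, by linarith [ht.2]⟩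
        exact (hg t ht').continuousAt.continuousWithinAt
      · intro t ht
        rw [interior_Ioc] at ht
        have ht' : |t| < ρ := abs_lt.mpr ⟨ht.1, by linarith [ht.2]⟩
        rw [(hg t ht').deriv]
        have h0mem : (0:ℝ) ∈ Ioo (-ρ) ρ := by constructor <;> linarith
        have htmem : t ∈ Ioo (-ρ) ρ := ⟨ht.1, by linarith [ht.2]⟩
        have := hmono htmem h0mem ht.2
        linarith
    obtain ⟨m, hm, hm1, hm2⟩ : ∃ m : ℝ, 0 < m ∧ m ≤ ρ/2 ∧ m ≤ η/2 :=
      ⟨min (ρ/2) (η/2), by positivity, min_le_left _ _, min_le_right _ _⟩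
    set t₀ : ℝ := -m with ht₀def
    have ht₀neg : t₀ < 0 := by rw [ht₀def]; linarith
    have h1 : t₀ ∈ Ioc (-ρ) 0 := ⟨by rw [ht₀def]; linarith, le_of_lt ht₀neg⟩
    have h2 : (0:ℝ) ∈ Ioc (-ρ) 0 := ⟨by linarith, le_refl _⟩
    have := hmg h1 h2 ht₀neg
    have habs' : w (L t₀) ≤ w x₀ := by
      apply habs
      rw [ht₀def, abs_neg, abs_of_pos hm]
      linarith
    have hL0 : g 0 = w x₀ := by simp [hgdef, hLdef]
    rw [hL0] at this
    exact absurd habs' (not_le.mpr this)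

section sq
variable {u : E2 → ℝ} (hu : ContDiff ℝ 2 u)
include hu

lemma fderiv_contDiff_one : ContDiff ℝ 1 (fderiv ℝ u) :=
  hu.fderiv_right (le_refl 2)

lemma Fi_contDiff (i : Fin 2) : ContDiff ℝ 1 (fun z => fderiv ℝ u z (ee i)) :=
  (fderiv_contDiff_one hu).clm_apply contDiff_const

lemma Fi_diff (i : Fin 2) : Differentiable ℝ (fun z => fderiv ℝ u z (ee i)) :=
  (Fi_contDiff hu i).differentiable one_ne_zero

lemma pdd_continuous (i : Fin 2) :
    Continuous (fun y => fderiv ℝ (fun z => fderiv ℝ u z (ee i)) y (ee i)) := by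
  have h1 := (Fi_contDiff hu i).continuous_fderiv_apply one_ne_zero
  exact h1.comp (continuous_id.prodMk continuous_const)

lemma lap_sq (x : E2) :
    euclideanLaplacian (fun y => u y * u y) x =
      2 * u x * euclideanLaplacian u x +
      2 * ((fderiv ℝ u x (ee 0))^2 + (fderiv ℝ u x (ee 1))^2) := by
  have hdiff : Differentiable ℝ u := hu.differentiable (by norm_num)
  set D : E2 → E2 →L[ℝ] ℝ := fun y => u y • fderiv ℝ u y + u y • fderiv ℝ u y with hDdef
  have hD : ∀ y ∈ (Set.univ : Set E2), HasFDerivAt (fun z => u z * u z) (D y) y :=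
    fun y _ => (hdiff y).hasFDerivAt.mul (hdiff y).hasFDerivAt
  set Bi : Fin 2 → E2 →L[ℝ] ℝ := fun i => fderiv ℝ (fun z => fderiv ℝ u z (ee i)) x with hBidef
  have hBi : ∀ i, HasFDerivAt (fun z => fderiv ℝ u z (ee i)) (Bi i) x :=
    fun i => (Fi_diff hu i x).hasFDerivAt
  set Dg : Fin 2 → E2 →L[ℝ] ℝ := fun i =>
    (u x • Bi i + (fderiv ℝ u x (ee i)) • fderiv ℝ u x) +
    (u x • Bi i + (fderiv ℝ u x (ee i)) • fderiv ℝ u x) with hDgdef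
  have hDg : ∀ i, HasFDerivAt (fun z => D z (ee i)) (Dg i) x := by
    intro i
    have heq : (fun z => D z (ee i)) =
        fun z => u z * fderiv ℝ u z (ee i) + u z * fderiv ℝ u z (ee i) := by
      funext z
      simp [hDdef, ContinuousLinearMap.add_apply, ContinuousLinearMap.smul_apply,
        smul_eq_mul]
    rw [heq]
    exact ((hdiff x).hasFDerivAt.mul (hBi i)).add ((hdiff x).hasFDerivAt.mul (hBi i))
  rw [laplacian_eq isOpen_univ (Set.mem_univ x) D Dg hD hDg]
  have hlap : euclideanLaplacian u x = Bi 0 (ee 0) + Bi 1 (ee 1) := by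
    simp [euclideanLaplacian, Fin.sum_univ_two, hBidef, ee]
  rw [Fin.sum_univ_two]
  simp only [hDgdef, ContinuousLinearMap.add_apply, ContinuousLinearMap.smul_apply,
    smul_eq_mul]
  rw [hlap]
  ring
end sq

lemma continuous_qq (p : E2) : Continuous (qq p) := by
  have h0 : Continuous (fun y : E2 => y 0) := (prj 0).continuous
  have h1 : Continuous (fun y : E2 => y 1) := (prj 1).continuous
  exact ((h0.sub continuous_const).pow 2).add ((h1.sub continuous_const).pow 2)

set_option maxHeartbeats 1000000 in
lemma phi_not_localMax {U : E2 → ℝ} (hU : ContDiff ℝ 2 U)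
    (hsub : ∀ x, 0 ≤ euclideanLaplacian U x)
    (p : E2) (ε δ : ℝ) (hδ : 0 < δ) {z' : E2} (hz' : z' ≠ p) :
    ¬ IsLocalMax (fun y => U y - ε * Real.log (qq p y) + δ * qq 0 y) z' := by
  have hdiff : Differentiable ℝ U := hU.differentiable (by norm_num)
  set s : Set E2 := {y | y ≠ p} with hsdef
  have hs : IsOpen s := isOpen_compl_singleton
  have hz's : z' ∈ s := hz'
  set D : E2 → E2 →L[ℝ] ℝ := fun y =>
    (fderiv ℝ U y - ε • ((qq p y)⁻¹ • Dq p y)) + δ • Dq 0 y with hDdef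
  have hD : ∀ y ∈ s, HasFDerivAt (fun z => U z - ε * Real.log (qq p z) + δ * qq 0 z) (D y) y := by
    intro y hy
    exact (((hdiff y).hasFDerivAt.sub ((hasFDerivAt_log_qq p hy).const_mul ε)).add
      ((hasFDerivAt_qq 0 y).const_mul δ))
  set Dg : Fin 2 → E2 → E2 →L[ℝ] ℝ := fun i y =>
    (fderiv ℝ (fun z => fderiv ℝ U z (ee i)) y -
      ε • ((qq p y)⁻¹ • ((2:ℝ) • prj i) +
        (2*(y i - p i)) • (-((qq p y)^2)⁻¹ • Dq p y))) +
    δ • ((2:ℝ) • prj i) with hDgdef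
  have hDval : ∀ (i : Fin 2) (z : E2), D z (ee i) =
      fderiv ℝ U z (ee i) - ε * ((qq p z)⁻¹ * (2*(z i - p i))) + δ * (2 * (z i)) := by
    intro i z
    rw [hDdef]
    simp only [ContinuousLinearMap.add_apply, ContinuousLinearMap.coe_sub', Pi.sub_apply,
      ContinuousLinearMap.coe_smul', Pi.smul_apply, smul_eq_mul, Dq_ee]
    norm_num
  have hDg : ∀ i, ∀ y ∈ s, HasFDerivAt (fun z => D z (ee i)) (Dg i y) y := by
    intro i y hy
    have heq : (fun z => D z (ee i)) =
        fun z => fderiv ℝ U z (ee i) - ε * ((qq p z)⁻¹ * (2*(z i - p i))) + δ * (2 * (z i)) := by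
      funext z; exact hDval i z
    rw [heq]
    have h1 : HasFDerivAt (fun z : E2 => fderiv ℝ U z (ee i))
        (fderiv ℝ (fun z => fderiv ℝ U z (ee i)) y) y := (Fi_diff hU i y).hasFDerivAt
    have hinv : HasFDerivAt (fun z : E2 => (qq p z)⁻¹)
        (-((qq p y)^2)⁻¹ • Dq p y) y := by
      exact (hasDerivAt_inv (ne_of_gt (qq_pos hy))).comp_hasFDerivAt y (hasFDerivAt_qq p y)
    have hlin : HasFDerivAt (fun z : E2 => 2*(z i - p i)) ((2:ℝ) • prj i) y :=
      ((hasFDerivAt_coord i y).sub_const (p i)).const_mul 2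
    have hmul := hinv.mul hlin
    have h2 := hmul.const_mul ε
    have h3 : HasFDerivAt (fun z : E2 => δ * (2 * z i)) (δ • ((2:ℝ) • prj i)) y :=
      ((hasFDerivAt_coord i y).const_mul 2).const_mul δ
    have htot := (h1.sub h2).add h3
    convert htot using 1
    all_goals rfl
  have hcont : ∀ i, ContinuousOn (fun y => Dg i y (ee i)) s := by
    intro i
    have hval : (fun y => Dg i y (ee i)) = fun y =>
        fderiv ℝ (fun z => fderiv ℝ U z (ee i)) y (ee i) -
          ε * ((qq p y)⁻¹ * 2 + (2*(y i - p i)) * (-((qq p y)^2)⁻¹ * (2*(y i - p i)))) +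
          δ * 2 := by
      funext y
      fin_cases i <;>
        simp [hDgdef, ContinuousLinearMap.add_apply, ContinuousLinearMap.coe_sub',
          ContinuousLinearMap.smul_apply, smul_eq_mul, Dq_ee, prj_ee] <;> ring
    rw [hval]
    have hqne : ∀ y ∈ s, qq p y ≠ 0 := fun y hy => ne_of_gt (qq_pos hy)
    have hcoord : Continuous (fun y : E2 => y i) := (prj i).continuous
    apply ContinuousOn.add
    apply ContinuousOn.sub
    · exact (pdd_continuous hU i).continuousOn
    · apply ContinuousOn.const_smul ?_ ε
      apply ContinuousOn.add
      · exact (((continuous_qq p).continuousOn.inv₀ hqne).mul continuousOn_const)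
      · apply ContinuousOn.mul
        · exact (continuous_const.mul (hcoord.sub continuous_const)).continuousOn
        · apply ContinuousOn.mul
          · exact (((continuous_qq p).pow 2).continuousOn.inv₀
              (fun y hy => pow_ne_zero 2 (hqne y hy))).neg
          · exact (continuous_const.mul (hcoord.sub continuous_const)).continuousOn
    · exact continuousOn_const
  intro hmax
  refine not_isLocalMax_of_pos hs hz's D Dg hD hDg hcont ?_ hmax
  -- the Laplacian value
  have hq0 : qq p z' ≠ 0 := ne_of_gt (qq_pos hz')
  have hval : ∀ i : Fin 2, Dg i z' (ee i) =
      fderiv ℝ (fun z => fderiv ℝ U z (ee i)) z' (ee i) -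
        ε * ((qq p z')⁻¹ * 2 + (2*(z' i - p i)) * (-((qq p z')^2)⁻¹ * (2*(z' i - p i)))) +
        δ * 2 := by
    intro i
    fin_cases i <;>
      simp [hDgdef, ContinuousLinearMap.add_apply, ContinuousLinearMap.coe_sub',
        ContinuousLinearMap.smul_apply, smul_eq_mul, Dq_ee, prj_ee] <;> ring
  rw [Fin.sum_univ_two, hval 0, hval 1]
  have hlapU : euclideanLaplacian U z' =
      fderiv ℝ (fun z => fderiv ℝ U z (ee 0)) z' (ee 0) +
      fderiv ℝ (fun z => fderiv ℝ U z (ee 1)) z' (ee 1) := by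
    simp [euclideanLaplacian, Fin.sum_univ_two, ee]
  have hε : ((qq p z')⁻¹ * 2 + (2*(z' 0 - p 0)) * (-((qq p z')^2)⁻¹ * (2*(z' 0 - p 0)))) +
      ((qq p z')⁻¹ * 2 + (2*(z' 1 - p 1)) * (-((qq p z')^2)⁻¹ * (2*(z' 1 - p 1)))) = 0 := by
    have hqq : qq p z' = (z' 0 - p 0)^2 + (z' 1 - p 1)^2 := rfl
    field_simp
    rw [hqq]; ring
  have hU0 := hsub z'
  rw [hlapU] at hU0
  have hε2 : ε * (((qq p z')⁻¹ * 2 + (2*(z' 0 - p 0)) * (-((qq p z')^2)⁻¹ * (2*(z' 0 - p 0)))) +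
      ((qq p z')⁻¹ * 2 + (2*(z' 1 - p 1)) * (-((qq p z')^2)⁻¹ * (2*(z' 1 - p 1))))) = 0 := by
    rw [hε]; ring
  linarith [hε2]

lemma le_of_forall_pos_mul {a b c : ℝ} (h : ∀ ε : ℝ, 0 < ε → a ≤ b + ε * c) : a ≤ b := by
  by_contra hab
  push_neg at hab
  rcases le_or_gt c 0 with hc | hc
  · have h1 := h (a - b) (by linarith)
    nlinarith
  · have h1 := h ((a - b)/(2*c)) (div_pos (by linarith) (by linarith))
    have : (a - b)/(2*c) * c = (a-b)/2 := by field_simp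
    rw [this] at h1
    linarith

lemma le_max_on_ball {U : E2 → ℝ} (hU : ContDiff ℝ 2 U) {M : ℝ} (hM : ∀ x, U x ≤ M)
    (hsub : ∀ x, 0 ≤ euclideanLaplacian U x) (p : E2) {r : ℝ} (hr : 0 < r) {z : E2}
    (hzmax : IsMaxOn U (closedBall p r) z) (x : E2) : U x ≤ U z := by
  by_cases hx : dist x p ≤ r
  · exact hzmax (mem_closedBall.mpr hx)
  push_neg at hx
  set d : ℝ := dist x p with hddef
  have hdr : r < d := hx
  have hd0 : 0 < d := lt_trans hr hdr
  -- main estimate, for every ε > 0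
  have hmain : ∀ ε : ℝ, 0 < ε → U x ≤ U z + ε * (Real.log (d^2) - Real.log (r^2)) := by
    intro ε hε
    set Rexp : ℝ := Real.exp ((M - U z + ε * Real.log (r^2)) / (2*ε)) with hRexpdef
    set R : ℝ := max d Rexp with hRdef
    have hRd : d ≤ R := le_max_left _ _
    have hR0 : 0 < R := lt_of_lt_of_le hd0 hRd
    have hkey : M - ε * Real.log (R^2) ≤ U z - ε * Real.log (r^2) := by
      have h1 : Real.log Rexp ≤ Real.log R :=
        Real.log_le_log (Real.exp_pos _) (le_max_right _ _)
      rw [hRexpdef, Real.log_exp] at h1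
      have h2 : Real.log (R^2) = 2 * Real.log R := by
        rw [Real.log_pow]; push_cast; ring
      rw [h2]
      have h3 : (M - U z + ε * Real.log (r^2)) ≤ 2*ε * Real.log R := by
        rw [div_le_iff₀ (by positivity)] at h1
        linarith [h1]
      nlinarith [h3]
    -- inner estimate, for every δ > 0
    have hinner : ∀ δ : ℝ, 0 < δ →
        U x - ε * Real.log (d^2) ≤ (U z - ε * Real.log (r^2)) + δ * (‖p‖ + R)^2 := by
      intro δ hδ
      set Φ : E2 → ℝ := fun y => U y - ε * Real.log (qq p y) + δ * qq 0 y with hΦdef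
      set K : Set E2 := closedBall p R \ ball p r with hKdef
      have hKcompact : IsCompact K := (isCompact_closedBall p R).diff isOpen_ball
      have hxK : x ∈ K := by
        constructor
        · exact mem_closedBall.mpr (le_trans (le_of_eq hddef.symm) hRd)
        · simp only [mem_ball, not_lt]
          linarith
      have hKne : ∀ y ∈ K, y ≠ p := by
        intro y hy hyp
        have : r ≤ dist y p := not_lt.mp (fun h => hy.2 (mem_ball.mpr h))
        rw [hyp, dist_self] at this
        linarith
      have hKcont : ContinuousOn Φ K := by
        apply ContinuousOn.add
        apply ContinuousOn.sub
        · exact hU.continuous.continuousOn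
        · apply ContinuousOn.const_smul ?_ ε
          apply ContinuousOn.log ((continuous_qq p).continuousOn)
          exact fun y hy => ne_of_gt (qq_pos (hKne y hy))
        · exact ((continuous_qq 0).continuousOn.const_smul δ)
      obtain ⟨z', hz'K, hz'max⟩ := hKcompact.exists_isMaxOn ⟨x, hxK⟩ hKcont
      have hz'R : dist z' p ≤ R := mem_closedBall.mp hz'K.1
      have hz'r : r ≤ dist z' p := not_lt.mp (fun h => hz'K.2 (mem_ball.mpr h))
      have hz'p : z' ≠ p := hKne z' hz'K
      have hznorm : ‖z'‖ ≤ ‖p‖ + R := by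
        calc ‖z'‖ = ‖p + (z' - p)‖ := by rw [add_sub_cancel]
        _ ≤ ‖p‖ + ‖z' - p‖ := norm_add_le _ _
        _ ≤ ‖p‖ + R := by
            rw [← dist_eq_norm]; linarith [hz'R]
      have hqq0 : qq 0 z' ≤ (‖p‖ + R)^2 := by
        rw [qq_zero]
        have h0 : (0:ℝ) ≤ ‖z'‖ := norm_nonneg _
        nlinarith [hznorm]
      -- Φ z' bounded by boundary values
      have hΦz' : Φ z' ≤ (U z - ε * Real.log (r^2)) + δ * (‖p‖ + R)^2 := by
        rcases eq_or_lt_of_le hz'r with hca | hca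
        · -- inner boundary
          have hUz' : U z' ≤ U z := hzmax (mem_closedBall.mpr (le_of_eq hca.symm))
          have hqq : qq p z' = r^2 := by rw [qq_eq_dist, ← hca]
          simp only [hΦdef]
          rw [hqq]
          nlinarith [hqq0, hδ, hUz']
        rcases eq_or_lt_of_le hz'R with hcb | hcb
        · -- outer boundary
          have hqq : qq p z' = R^2 := by rw [qq_eq_dist, hcb]
          simp only [hΦdef]
          rw [hqq]
          have := hM z'
          nlinarith [hqq0, hδ, hkey]
        · -- interior: impossible
          exfalso
          have hO : IsOpen (ball p R \ closedBall p r) := isOpen_ball.sdiff isClosed_closedBall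
          have hz'O : z' ∈ ball p R \ closedBall p r := by
            constructor
            · exact mem_ball.mpr hcb
            · simp only [mem_closedBall, not_le]; exact hca
          have hOK : (ball p R \ closedBall p r) ⊆ K := by
            intro y hy
            exact ⟨ball_subset_closedBall hy.1, fun hc => hy.2 (ball_subset_closedBall hc)⟩
          have hloc : IsLocalMax Φ z' :=
            hz'max.isLocalMax (Filter.mem_of_superset (hO.mem_nhds hz'O) hOK)
          exact phi_not_localMax hU hsub p ε δ hδ hz'p hloc
      have hΦx : U x - ε * Real.log (d^2) ≤ Φ x := by
        have hqq : qq p x = d^2 := by rw [qq_eq_dist]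
        have h0 : 0 ≤ qq 0 x := by rw [qq_zero]; positivity
        simp only [hΦdef]
        rw [hqq]
        nlinarith [hδ, h0]
      have := hz'max hxK
      simp only [IsMaxOn, IsMaxFilter] at this
      calc U x - ε * Real.log (d^2) ≤ Φ x := hΦx
      _ ≤ Φ z' := hz'max hxK
      _ ≤ _ := hΦz'
    have := le_of_forall_pos_mul hinner
    linarith
  have := le_of_forall_pos_mul (c := Real.log (d^2) - Real.log (r^2)) (b := U z)
    (a := U x) hmain
  exact this

lemma liouville {U : E2 → ℝ} (hU : ContDiff ℝ 2 U) {M : ℝ} (hM : ∀ x, U x ≤ M)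
    (hsub : ∀ x, 0 ≤ euclideanLaplacian U x) (x y : E2) : U x = U y := by
  have key : ∀ a b : E2, U a ≤ U b := by
    intro a b
    apply le_of_forall_pos_le_add
    intro ε' hε'
    have hcont : ContinuousAt U b := hU.continuous.continuousAt
    rw [Metric.continuousAt_iff] at hcont
    obtain ⟨rδ, hrδ, hball⟩ := hcont ε' hε'
    set r : ℝ := rδ/2 with hrdef
    have hr : 0 < r := by positivity
    obtain ⟨z, hzK, hzmax⟩ := (isCompact_closedBall b r).exists_isMaxOn
      ⟨b, mem_closedBall_self (le_of_lt hr)⟩ hU.continuous.continuousOn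
    have h1 : U a ≤ U z := le_max_on_ball hU hM hsub b hr hzmax a
    have h2 : dist z b < rδ := lt_of_le_of_lt (mem_closedBall.mp hzK) (by linarith)
    have h3 := hball h2
    rw [Real.dist_eq] at h3
    have := abs_lt.mp h3
    linarith [this.1, this.2]
  exact le_antisymm (key x y) (key y x)

lemma lap_const (c : ℝ) (x : E2) : euclideanLaplacian (fun _ : E2 => c) x = 0 := by
  simp [euclideanLaplacian]

lemma decomp (v : E2) : v = v 0 • ee 0 + v 1 • ee 1 := by
  ext j
  fin_cases j <;>
    simp [ee, EuclideanSpace.single_apply, PiLp.add_apply, PiLp.smul_apply]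

/-- Every bounded `C²` entire solution `u : ℝ² → ℝ` of
`Δu = u · ∏_{k=1}^{N} (u - k)²` is a constant equal to one of `0, 1, …, N`; i.e. the set
of bounded entire solutions in dimension 2 is `{0, 1, …, N}`. -/
theorem bounded_entire_solution_2d_constant (N : ℕ)
    (u : EuclideanSpace ℝ (Fin 2) → ℝ)
    (hbound : ∃ M : ℝ, ∀ x, |u x| ≤ M)
    (hsmooth : ContDiff ℝ 2 u)
    (heq : ∀ x, euclideanLaplacian u x =
      u x * ∏ k ∈ Finset.Icc 1 N, (u x - (k : ℝ)) ^ 2) :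
    ∃ j : ℕ, j ≤ N ∧ ∀ x, u x = (j : ℝ) := by
  obtain ⟨M, hM⟩ := hbound
  set U : E2 → ℝ := fun y => u y * u y with hUdef
  have hUc : ContDiff ℝ 2 U := hsmooth.mul hsmooth
  have hUb : ∀ x, U x ≤ M^2 := by
    intro x
    have h1 := hM x
    have h2 : -M ≤ u x ∧ u x ≤ M := abs_le.mp h1
    have : U x = u x * u x := rfl
    rw [this]
    nlinarith [h2.1, h2.2]
  have hprod_nonneg : ∀ x, 0 ≤ ∏ k ∈ Finset.Icc 1 N, (u x - (k : ℝ)) ^ 2 :=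
    fun x => Finset.prod_nonneg (fun k _ => sq_nonneg _)
  have hsubU : ∀ x, 0 ≤ euclideanLaplacian U x := by
    intro x
    rw [hUdef, lap_sq hsmooth x, heq x]
    nlinarith [hprod_nonneg x, sq_nonneg (fderiv ℝ u x (ee 0)), sq_nonneg (fderiv ℝ u x (ee 1)),
      sq_nonneg (u x)]
  -- U is constant by Liouville
  have hUconst : ∀ x y : E2, U x = U y := liouville hUc hUb hsubU
  have hUfun : U = fun _ => U 0 := funext (fun x => hUconst x 0)
  have hlapU0 : ∀ x, euclideanLaplacian U x = 0 := by
    intro x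
    rw [hUfun, lap_const]
  -- so all first partials of u vanish
  have hpd : ∀ (x : E2) (i : Fin 2), fderiv ℝ u x (ee i) = 0 := by
    intro x i
    have h0 := hlapU0 x
    rw [hUdef, lap_sq hsmooth x, heq x] at h0
    have hA : (fderiv ℝ u x (ee 0))^2 + (fderiv ℝ u x (ee 1))^2 = 0 := by
      nlinarith [hprod_nonneg x, sq_nonneg (fderiv ℝ u x (ee 0)),
        sq_nonneg (fderiv ℝ u x (ee 1)), sq_nonneg (u x)]
    have h1 : fderiv ℝ u x (ee 0) = 0 ∧ fderiv ℝ u x (ee 1) = 0 := by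
      constructor <;> nlinarith [sq_nonneg (fderiv ℝ u x (ee 0)), sq_nonneg (fderiv ℝ u x (ee 1))]
    fin_cases i
    · exact h1.1
    · exact h1.2
  have hfd0 : ∀ x : E2, fderiv ℝ u x = 0 := by
    intro x
    ext v
    rw [show v = v 0 • ee 0 + v 1 • ee 1 from decomp v]
    simp [map_add, map_smul, hpd x 0, hpd x 1]
  have huconst : ∀ x y : E2, u x = u y :=
    is_const_of_fderiv_eq_zero (hsmooth.differentiable (by norm_num)) hfd0
  set c : ℝ := u 0 with hcdef
  have hufun : u = fun _ => c := funext (fun x => huconst x 0)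
  have hlapu0 : euclideanLaplacian u 0 = 0 := by
    rw [hufun, lap_const]
  have hc : c * ∏ k ∈ Finset.Icc 1 N, (c - (k : ℝ)) ^ 2 = 0 := by
    have := heq 0
    rw [hlapu0] at this
    exact this.symm
  rcases mul_eq_zero.mp hc with hc0 | hcp
  · exact ⟨0, Nat.zero_le N, fun x => by rw [huconst x 0, ← hcdef, hc0]; norm_num⟩
  · obtain ⟨k, hk, hk0⟩ := Finset.prod_eq_zero_iff.mp hcp
    have hck : c = (k : ℝ) := by
      have := pow_eq_zero_iff (n := 2) (by norm_num) |>.mp hk0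
      linarith
    exact ⟨k, (Finset.mem_Icc.mp hk).2, fun x => by rw [huconst x 0, ← hcdef, hck]⟩
end
end
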